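/- Let q : ℝ → ℍ be a twice differentiable regular curve (q'(s) ≠ 0 for all s), let t = q'/|q'| be the unit tangent. Then there exists a pure imaginary quaternion-valued function κ (the quaternionic curvature) such that t' = κ · q'; explicitly, the real components are κ_ℓ = ⟨q'', e_ℓ·t⟩ / |q'|² for ℓ = 1,2,3, where e_1 = i, e_2 = j, e_3 = k. -/

import Mathlib

open Quaternion

noncomputable def qi : ℍ[ℝ] := ⟨0, 1, 0, 0⟩
noncomputable def qj : ℍ[ℝ] := ⟨0, 0, 1, 0⟩
noncomputable def qk : ℍ[ℝ] := ⟨0, 0, 0, 1⟩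

/-- Quaternionic inner product ⟨p,r⟩ = Re(p * conj r). -/
noncomputable def qinner (p r : ℍ[ℝ]) : ℝ := (p * star r).re

/-!
Differentiating `t = q' / ‖q'‖` gives `t' = q'' / ‖q'‖ - (⟪q', q''⟫ / ‖q'‖³) q'`.
Since `q̄' q' = ‖q'‖²` and `Re (q'' q̄') = ⟪q'', q'⟫`, the pure quaternion
`κ = Im (q'' q̄') / ‖q'‖³` satisfies `κ q' = (‖q'‖² q'' - ⟪q'', q'⟫ q') / ‖q'‖³ = t'`.
Its `e_ℓ`-component is `Re (q'' q̄' ē_ℓ) / ‖q'‖³ = ⟨q'', e_ℓ t⟩ / ‖q'‖²`.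
-/

open scoped RealInnerProductSpace

section NormalizedCurve

variable {F : Type*} [NormedAddCommGroup F] [InnerProductSpace ℝ F] {f : ℝ → F} {f' : F} {x : ℝ}

theorem HasDerivAt.norm (hf : HasDerivAt f f' x) (h0 : f x ≠ 0) :
    HasDerivAt (‖f ·‖) (⟪f x, f'⟫ / ‖f x‖) x := by
  have h := hf.norm_sq.sqrt (by positivity)
  simp only [Real.sqrt_sq (norm_nonneg _)] at h
  convert h using 1
  ring

theorem HasDerivAt.inv_norm_smul (hf : HasDerivAt f f' x) (h0 : f x ≠ 0) :
    HasDerivAt (fun u ↦ ‖f u‖⁻¹ • f u) (‖f x‖⁻¹ • f' - (⟪f x, f'⟫ / ‖f x‖ ^ 3) • f x) x := by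
  have hn : ‖f x‖ ≠ 0 := norm_ne_zero_iff.mpr h0
  convert ((hf.norm h0).fun_inv hn).fun_smul hf using 1
  rw [sub_eq_add_neg, ← neg_smul]
  congr 2
  field_simp

end NormalizedCurve

theorem Quaternion.im_mul_star_mul (b a : ℍ[ℝ]) :
    (b * star a).im * a = normSq a • b - ⟪b, a⟫ • a := by
  rw [← sub_eq_of_eq_add' (re_add_im (b * star a)).symm, sub_mul, mul_assoc, star_mul_self,
    mul_coe_eq_smul, coe_mul_eq_smul, inner_def]

theorem qinner_qi_mul (p r : ℍ[ℝ]) : qinner p (qi * r) = (p * star r).imI := by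
  rw [qinner, star_mul, ← mul_assoc, re_mul, re_star, imI_star, imJ_star, imK_star]
  simp [qi]

theorem qinner_qj_mul (p r : ℍ[ℝ]) : qinner p (qj * r) = (p * star r).imJ := by
  rw [qinner, star_mul, ← mul_assoc, re_mul, re_star, imI_star, imJ_star, imK_star]
  simp [qj]

theorem qinner_qk_mul (p r : ℍ[ℝ]) : qinner p (qk * r) = (p * star r).imK := by
  rw [qinner, star_mul, ← mul_assoc, re_mul, re_star, imI_star, imJ_star, imK_star]
  simp [qk]

theorem stmt17_general (q : ℝ → ℍ[ℝ])
    (hq' : Differentiable ℝ (deriv q)) (hreg : ∀ s, deriv q s ≠ 0)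
    (t : ℝ → ℍ[ℝ]) (ht : ∀ s, t s = (‖deriv q s‖)⁻¹ • deriv q s) :
    ∃ κ : ℝ → ℍ[ℝ],
      (∀ s, (κ s).re = 0) ∧
      (∀ s, deriv t s = κ s * deriv q s) ∧
      (∀ s, (κ s).imI = qinner (deriv (deriv q) s) (qi * t s) / ‖deriv q s‖ ^ 2 ∧
            (κ s).imJ = qinner (deriv (deriv q) s) (qj * t s) / ‖deriv q s‖ ^ 2 ∧
            (κ s).imK = qinner (deriv (deriv q) s) (qk * t s) / ‖deriv q s‖ ^ 2) := by
  obtain rfl : t = fun s ↦ ‖deriv q s‖⁻¹ • deriv q s := funext ht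
  refine ⟨fun s ↦ (‖deriv q s‖ ^ 3)⁻¹ • (deriv (deriv q) s * star (deriv q s)).im,
    fun s ↦ by simp, fun s ↦ ?_, fun s ↦ ?_⟩
  · have hn : ‖deriv q s‖ ≠ 0 := norm_ne_zero_iff.mpr (hreg s)
    rw [((hq' s).hasDerivAt.inv_norm_smul (hreg s)).deriv, smul_mul_assoc, im_mul_star_mul,
      normSq_eq_norm_mul_self, real_inner_comm, smul_sub, smul_smul, smul_smul]
    congr 2 <;> field_simp
  · simp only [qinner_qi_mul, qinner_qj_mul, qinner_qk_mul]
    simp only [Quaternion.star_smul, mul_smul_comm, imI_smul, imJ_smul, imK_smul,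
      imI_im, imJ_im, imK_im, smul_eq_mul]
    refine ⟨?_, ?_, ?_⟩ <;> field_simp

theorem stmt17 (q : ℝ → ℍ[ℝ]) (hq : Differentiable ℝ q)
    (hq' : Differentiable ℝ (deriv q)) (hreg : ∀ s, deriv q s ≠ 0)
    (t : ℝ → ℍ[ℝ]) (ht : ∀ s, t s = (‖deriv q s‖)⁻¹ • deriv q s) :
    ∃ κ : ℝ → ℍ[ℝ],
      (∀ s, (κ s).re = 0) ∧
      (∀ s, deriv t s = κ s * deriv q s) ∧
      (∀ s, (κ s).imI = qinner (deriv (deriv q) s) (qi * t s) / ‖deriv q s‖ ^ 2 ∧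
            (κ s).imJ = qinner (deriv (deriv q) s) (qj * t s) / ‖deriv q s‖ ^ 2 ∧
            (κ s).imK = qinner (deriv (deriv q) s) (qk * t s) / ‖deriv q s‖ ^ 2) :=
  stmt17_general q hq' hreg t ht
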